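/- There is no elliptic curve E over F_27 with exactly 22 rational points. -/

import Mathlib

/-!
Any two fields with 27 elements are isomorphic, and the number of points of a Weierstrass curve
is invariant under ring isomorphisms and under admissible changes of variables. So it suffices to
consider curves over an explicit model of `𝔽₂₇` in characteristic-three normal form
`y² = x³ + a₂x² + a₆` or `y² = x³ + a₄x + a₆`. Since every nonzero element of `𝔽₂₇` is plus or
minus a fourth power, scaling `(x, y) ↦ (u²x, u³y)` moreover makes `a₂`, resp. `a₄`, equal to `±1`,
and a direct count shows that none of the remaining 108 curves has exactly 21 affine points.
-/

open WeierstrassCurve.Affine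

namespace WeierstrassCurve

variable {R S : Type*} [CommRing R] [CommRing S]

namespace VariableChange

def coordMap (C : VariableChange R) (p : R × R) : R × R :=
  (C.u ^ 2 * p.1 + C.r, C.u ^ 3 * p.2 + C.u ^ 2 * C.s * p.1 + C.t)

lemma coordMap_one : coordMap (1 : VariableChange R) = id := by
  ext p <;> simp [coordMap, one_def]

lemma coordMap_mul (C C' : VariableChange R) :
    (C * C').coordMap = C'.coordMap ∘ C.coordMap := by
  ext p <;> simp only [coordMap, mul_def, Units.val_mul, Function.comp_apply] <;> ring

def coordEquiv (C : VariableChange R) : R × R ≃ R × R where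
  toFun := C.coordMap
  invFun := C⁻¹.coordMap
  left_inv p := by
    rw [← Function.comp_apply (f := C⁻¹.coordMap), ← coordMap_mul, mul_inv_cancel, coordMap_one,
      id]
  right_inv p := by
    rw [← Function.comp_apply (f := C.coordMap), ← coordMap_mul, inv_mul_cancel, coordMap_one, id]

lemma translation_mul (C : VariableChange R) (x y : R) :
    ⟨1, x, 0, y⟩ * C =
      ⟨C.u, 0, C.s, 0⟩ * ⟨1, (C.coordMap (x, y)).1, 0, (C.coordMap (x, y)).2⟩ := by
  ext <;> simp only [mul_def, coordMap, Units.val_one, Units.val_mul] <;> ring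

end VariableChange

variable (W : WeierstrassCurve R)

lemma nonsingular_zero_mk_smul_iff (u : Rˣ) (s : R) :
    (VariableChange.mk u 0 s 0 • W).toAffine.Nonsingular 0 0 ↔ W.toAffine.Nonsingular 0 0 := by
  have hu (n : ℕ) (a : R) : (u⁻¹ : Rˣ) ^ n * a = 0 ↔ a = 0 := by
    rw [← Units.val_pow_eq_pow_val]
    exact Units.mul_right_eq_zero _
  by_cases h₃ : W.a₃ = 0 <;>
    simp [nonsingular_zero, variableChange_a₃, variableChange_a₄, variableChange_a₆, hu, h₃]

lemma nonsingular_smul_iff (C : VariableChange R) (x y : R) :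
    (C • W).toAffine.Nonsingular x y ↔
      W.toAffine.Nonsingular (C.coordMap (x, y)).1 (C.coordMap (x, y)).2 := by
  -- After translating `(x, y)` to the origin, `translation_mul` leaves a change of variables with
  -- `r = t = 0`, which does not affect nonsingularity at the origin.
  rw [nonsingular_iff_variableChange, smul_smul, C.translation_mul, mul_smul,
    nonsingular_zero_mk_smul_iff, ← nonsingular_iff_variableChange]

lemma natCard_point_smul (C : VariableChange R) :
    Nat.card (C • W).toAffine.Point = Nat.card W.toAffine.Point :=
  Nat.card_congr <| (nonsingularPointEquiv _).trans <|
    (Equiv.optionCongr <| C.coordEquiv.subtypeEquiv fun p ↦ W.nonsingular_smul_iff C p.1 p.2).trans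
      (nonsingularPointEquiv _).symm

lemma natCard_point_map (σ : R ≃+* S) :
    Nat.card (W.map (σ : R →+* S)).toAffine.Point = Nat.card W.toAffine.Point :=
  Nat.card_congr <| (nonsingularPointEquiv _).trans <|
    (Equiv.optionCongr <| (σ.toEquiv.prodCongr σ.toEquiv).symm.subtypeEquiv fun p ↦ by
      simpa using W.toAffine.map_nonsingular (f := (σ : R →+* S)) σ.injective
        (σ.symm p.1) (σ.symm p.2)).trans
      (nonsingularPointEquiv _).symm

lemma mk_inv_zero_zero_zero_smul (u : Rˣ) :
    VariableChange.mk u⁻¹ 0 0 0 • W =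
      ⟨u * W.a₁, u ^ 2 * W.a₂, u ^ 3 * W.a₃, u ^ 4 * W.a₄, u ^ 6 * W.a₆⟩ := by
  ext <;> simp [variableChange_def]

lemma natCard_equation_mk (a₂ a₄ a₆ : R) :
    Nat.card {p : R × R // (⟨0, a₂, 0, a₄, a₆⟩ : WeierstrassCurve R).toAffine.Equation p.1 p.2} =
      Nat.card {p : R × R // p.2 ^ 2 = p.1 ^ 3 + a₂ * p.1 ^ 2 + a₄ * p.1 + a₆} :=
  Nat.card_congr <| Equiv.subtypeEquivRight fun p ↦ by simp [Affine.equation_iff]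

lemma natCard_point_eq_natCard_equation_add_one {K : Type*} [Field K] [Finite K]
    (W : WeierstrassCurve K) [W.IsElliptic] :
    Nat.card W.toAffine.Point = Nat.card {p : K × K // W.toAffine.Equation p.1 p.2} + 1 :=
  (Nat.card_congr (pointEquiv _)).trans Finite.card_option

end WeierstrassCurve

/-- `c₀ + c₁ ξ + c₂ ξ²` in `𝔽₃[ξ]/(ξ³ - ξ - 1)`; the cubic has no root in `𝔽₃`, so this is `𝔽₂₇`. -/
@[ext]
structure F27 where
  c₀ : ZMod 3
  c₁ : ZMod 3
  c₂ : ZMod 3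

namespace F27

def coeffEquiv : F27 ≃ ZMod 3 × ZMod 3 × ZMod 3 where
  toFun a := (a.c₀, a.c₁, a.c₂)
  invFun p := ⟨p.1, p.2.1, p.2.2⟩

instance : DecidableEq F27 := fun a b ↦
  decidable_of_iff (a.c₀ = b.c₀ ∧ a.c₁ = b.c₁ ∧ a.c₂ = b.c₂) F27.ext_iff.symm

instance : Fintype F27 := Fintype.ofEquiv _ coeffEquiv.symm

lemma card_eq : Fintype.card F27 = 27 := rfl

instance : Zero F27 := ⟨⟨0, 0, 0⟩⟩
instance : One F27 := ⟨⟨1, 0, 0⟩⟩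
instance : Add F27 := ⟨fun a b ↦ ⟨a.c₀ + b.c₀, a.c₁ + b.c₁, a.c₂ + b.c₂⟩⟩
instance : Neg F27 := ⟨fun a ↦ ⟨-a.c₀, -a.c₁, -a.c₂⟩⟩
instance : Mul F27 := ⟨fun a b ↦
  ⟨a.c₀ * b.c₀ + a.c₁ * b.c₂ + a.c₂ * b.c₁,
   a.c₀ * b.c₁ + a.c₁ * b.c₀ + a.c₁ * b.c₂ + a.c₂ * b.c₁ + a.c₂ * b.c₂,
   a.c₀ * b.c₂ + a.c₁ * b.c₁ + a.c₂ * b.c₀ + a.c₂ * b.c₂⟩⟩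

lemma zero_def : (0 : F27) = ⟨0, 0, 0⟩ := rfl
lemma one_def : (1 : F27) = ⟨1, 0, 0⟩ := rfl
lemma add_def (a b : F27) : a + b = ⟨a.c₀ + b.c₀, a.c₁ + b.c₁, a.c₂ + b.c₂⟩ := rfl
lemma neg_def (a : F27) : -a = ⟨-a.c₀, -a.c₁, -a.c₂⟩ := rfl
lemma mul_def (a b : F27) : a * b =
    ⟨a.c₀ * b.c₀ + a.c₁ * b.c₂ + a.c₂ * b.c₁,
     a.c₀ * b.c₁ + a.c₁ * b.c₀ + a.c₁ * b.c₂ + a.c₂ * b.c₁ + a.c₂ * b.c₂,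
     a.c₀ * b.c₂ + a.c₁ * b.c₁ + a.c₂ * b.c₀ + a.c₂ * b.c₂⟩ := rfl

instance : CommRing F27 where
  add_assoc _ _ _ := by simp only [add_def, add_assoc]
  zero_add _ := by simp only [add_def, zero_def, zero_add]
  add_zero _ := by simp only [add_def, zero_def, add_zero]
  add_comm _ _ := by simp only [add_def, add_comm]
  neg_add_cancel _ := by simp only [add_def, neg_def, zero_def, neg_add_cancel]
  mul_assoc _ _ _ := by ext <;> simp only [mul_def] <;> ring
  one_mul _ := by ext <;> simp only [mul_def, one_def] <;> ring
  mul_one _ := by ext <;> simp only [mul_def, one_def] <;> ring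
  left_distrib _ _ _ := by ext <;> simp only [mul_def, add_def] <;> ring
  right_distrib _ _ _ := by ext <;> simp only [mul_def, add_def] <;> ring
  mul_comm _ _ := by ext <;> simp only [mul_def] <;> ring
  zero_mul _ := by ext <;> simp only [mul_def, zero_def] <;> ring
  mul_zero _ := by ext <;> simp only [mul_def, zero_def] <;> ring
  nsmul := nsmulRec
  zsmul := zsmulRec

instance : Nontrivial F27 := ⟨⟨0, 1, by decide⟩⟩

instance : IsDomain F27 :=
  have : NoZeroDivisors F27 := ⟨fun {a b} ↦ by revert a b; decide +kernel⟩
  NoZeroDivisors.to_isDomain _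

noncomputable instance : Field F27 := Fintype.fieldOfDomain F27

instance : CharP F27 3 := (CharP.charP_iff_prime_eq_zero Nat.prime_three).2 (by decide)

lemma exists_pow_four_mul_eq_one_or_neg_one :
    ∀ a : F27, a ≠ 0 → ∃ u : F27, u ≠ 0 ∧ (u ^ 4 * a = 1 ∨ u ^ 4 * a = -1) := by
  decide +kernel

lemma card_affine_points_ne_21 : ∀ s a₆ : F27, s = 1 ∨ s = -1 →
    Fintype.card {p : F27 × F27 // p.2 ^ 2 = p.1 ^ 3 + s * p.1 ^ 2 + 0 * p.1 + a₆} ≠ 21 ∧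
    Fintype.card {p : F27 × F27 // p.2 ^ 2 = p.1 ^ 3 + 0 * p.1 ^ 2 + s * p.1 + a₆} ≠ 21 := by
  decide +kernel

open WeierstrassCurve

lemma exists_variableChange_smul_eq (W : WeierstrassCurve F27) [W.IsElliptic] :
    ∃ (C : VariableChange F27) (s a₆ : F27), (s = 1 ∨ s = -1) ∧
      (C • W = ⟨0, s, 0, 0, a₆⟩ ∨ C • W = ⟨0, 0, 0, s, a₆⟩) := by
  obtain ⟨C, hC⟩ := W.exists_variableChange_isCharThreeNF
  have hΔ : (C • W).Δ ≠ 0 := (C • W).isUnit_Δ.ne_zero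
  cases hC with
  | of_j_ne_zero =>
    have ha₂ : (C • W).a₂ ≠ 0 := by
      intro h
      rw [Δ_of_isCharThreeJNeZeroNF_of_char_three, h] at hΔ
      simp at hΔ
    obtain ⟨u, hu, hs⟩ := exists_pow_four_mul_eq_one_or_neg_one _ ha₂
    refine ⟨⟨(Units.mk0 u hu ^ 2)⁻¹, 0, 0, 0⟩ * C, _, u ^ 12 * (C • W).a₆, hs, Or.inl ?_⟩
    rw [mul_smul, mk_inv_zero_zero_zero_smul]
    ext <;> simp [a₄_of_isCharThreeJNeZeroNF, ← pow_mul]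
  | of_j_eq_zero =>
    have ha₄ : (C • W).a₄ ≠ 0 := by
      intro h
      rw [Δ_of_isShortNF_of_char_three, h] at hΔ
      simp at hΔ
    obtain ⟨u, hu, hs⟩ := exists_pow_four_mul_eq_one_or_neg_one _ ha₄
    refine ⟨⟨(Units.mk0 u hu)⁻¹, 0, 0, 0⟩ * C, _, u ^ 6 * (C • W).a₆, hs, Or.inr ?_⟩
    rw [mul_smul, mk_inv_zero_zero_zero_smul]
    ext <;> simp [a₂_of_isShortNF]

lemma natCard_point_ne_22 (W : WeierstrassCurve F27) [W.IsElliptic] :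
    Nat.card W.toAffine.Point ≠ 22 := by
  obtain ⟨C, s, a₆, hs, hW | hW⟩ := exists_variableChange_smul_eq W <;>
  · rw [← W.natCard_point_smul C, natCard_point_eq_natCard_equation_add_one, hW,
      natCard_equation_mk, Nat.card_eq_fintype_card]
    have := card_affine_points_ne_21 s a₆ hs
    omega

end F27

/-- There is no elliptic curve over the field with 27 elements having exactly 22
rational points. -/
theorem stmt_7 (F : Type*) [Field F] [Fintype F] (hF : Fintype.card F = 27)
    (W : WeierstrassCurve F) [W.IsElliptic] :
    Nat.card W.toAffine.Point ≠ 22 := by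
  rw [← W.natCard_point_map (FiniteField.ringEquivOfCardEq (hF.trans F27.card_eq.symm))]
  exact F27.natCard_point_ne_22 _
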